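/- Let F be a finite field, G a finite abelian group, and u, v ∈ FG with FG·u = Ann(v) and FG·v = Ann(u). If u = a·u^{(-1)} for some unit a ∈ FG, then there exists a unit b ∈ FG with v = b·v^{(-1)}. -/

import Mathlib

/-- The annihilator of a single element of the group algebra. -/
def ann {F G : Type*} [Field F] [CommGroup G] (v : MonoidAlgebra F G) :
    Ideal (MonoidAlgebra F G) where
  carrier := {x | x * v = 0}
  add_mem' := by
    intro a b ha hb
    simp only [Set.mem_setOf_eq, add_mul] at *
    rw [ha, hb, add_zero]
  zero_mem' := by simp
  smul_mem' := by
    intro c x hx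
    simp only [Set.mem_setOf_eq, smul_eq_mul] at *
    rw [mul_assoc, hx, mul_zero]

/-- `w^{(-1)} = Σ_g w_{g⁻¹} g`. -/
def inv' {F G : Type*} [Field F] [CommGroup G] (v : MonoidAlgebra F G) :
    MonoidAlgebra F G :=
  MonoidAlgebra.ofCoeff (Finsupp.equivMapDomain (Equiv.inv G) v.coeff)

/-!
Since `u = a·u⁽⁻¹⁾` with `a` a unit and `u·v = 0`, also `u·v⁽⁻¹⁾ = a·(u·v)⁽⁻¹⁾ = 0`, so
`v⁽⁻¹⁾ ∈ Ann(u) = FG·v`. Applying the involutive automorphism `w ↦ w⁽⁻¹⁾` gives the reverse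
divisibility, so `v` and `v⁽⁻¹⁾` generate the same principal ideal. In a finite commutative ring
such elements are associated: if `y = x c` and `x = y d`, some power `e` of `z = c d` is idempotent,
`x e = x`, and `c e + (1 - e)` is a unit (with inverse `d z^k e + (1 - e)` where `e = z^(k+1)`)
carrying `x` to `y`.
-/

theorem exists_ne_zero_isIdempotentElem_pow {M : Type*} [Monoid M] [Finite M] (z : M) :
    ∃ n ≠ 0, IsIdempotentElem (z ^ n) := by
  obtain ⟨i, j, hne, hij⟩ := Finite.exists_ne_map_eq_of_infinite (z ^ · : ℕ → M)
  wlog hlt : i < j generalizing i j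
  · exact this j i hne.symm hij.symm (by omega)
  set t := j - i
  have hperiod (n : ℕ) (hn : i ≤ n) : z ^ (n + t) = z ^ n := by
    rw [← Nat.sub_add_cancel hn, add_assoc, pow_add, Nat.add_sub_cancel' hlt.le, ← hij,
      ← pow_add]
  have hperiod_mul (s n : ℕ) (hn : i ≤ n) : z ^ (n + s * t) = z ^ n := by
    induction s with
    | zero => simp
    | succ s ih => rw [add_mul, one_mul, ← add_assoc, hperiod _ (by omega), ih]
  have ht : 0 < t := by omega
  -- a multiple of the period `t` that is at least the preperiod `i`
  refine ⟨(i + 1) * t, by positivity, ?_⟩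
  rw [IsIdempotentElem, ← pow_add]
  exact hperiod_mul (i + 1) _ (by nlinarith)

theorem associated_of_dvd_dvd_of_finite {R : Type*} [CommRing R] [Finite R] {x y : R}
    (hxy : x ∣ y) (hyx : y ∣ x) : Associated x y := by
  obtain ⟨c, rfl⟩ := hxy
  obtain ⟨d, hd⟩ := hyx
  obtain ⟨n, hn, he⟩ := exists_ne_zero_isIdempotentElem_pow (c * d)
  obtain ⟨k, rfl⟩ := Nat.exists_eq_succ_of_ne_zero hn
  have hxz : x * (c * d) = x := by rw [← mul_assoc, ← hd]
  have hxpow (m : ℕ) : x * (c * d) ^ m = x := by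
    induction m with
    | zero => rw [pow_zero, mul_one]
    | succ m ih => rw [pow_succ, ← mul_assoc, ih, hxz]
  set e := (c * d) ^ (k + 1)
  have he_mul : e * e = e := he
  have hz : c * d * (c * d) ^ k = e := (pow_succ' _ _).symm
  have hunit : (c * e + (1 - e)) * (d * (c * d) ^ k * e + (1 - e)) = 1 := by
    linear_combination (e + 2 - c - d * (c * d) ^ k) * he_mul + e * e * hz
  refine ⟨⟨_, _, hunit, (mul_comm _ _).trans hunit⟩, ?_⟩
  linear_combination (c - 1) * hxpow (k + 1)

section Inv'

variable {F G : Type*} [Field F] [CommGroup G]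

theorem inv'_eq_domCongr (x : MonoidAlgebra F G) :
    inv' x = MonoidAlgebra.domCongr F F (MulEquiv.inv G) x := by
  ext g
  simp [inv']

theorem inv'_mul (x y : MonoidAlgebra F G) : inv' (x * y) = inv' x * inv' y := by
  simp only [inv'_eq_domCongr, map_mul]

theorem inv'_inv' (x : MonoidAlgebra F G) : inv' (inv' x) = x := by
  ext g
  simp [inv']

theorem inv'_dvd_inv' {x y : MonoidAlgebra F G} (h : x ∣ y) : inv' x ∣ inv' y := by
  simpa only [inv'_eq_domCongr] using map_dvd _ h

end Inv'

theorem stmt_17 (F G : Type*) [Field F] [Fintype F] [CommGroup G] [Fintype G]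
    (u v : MonoidAlgebra F G)
    (hu : (Ideal.span {u} : Ideal (MonoidAlgebra F G)) = ann v)
    (hv : (Ideal.span {v} : Ideal (MonoidAlgebra F G)) = ann u)
    (a : (MonoidAlgebra F G)ˣ) (ha : u = (a : MonoidAlgebra F G) * inv' u) :
    ∃ b : (MonoidAlgebra F G)ˣ, v = (b : MonoidAlgebra F G) * inv' v := by
  have : Finite (MonoidAlgebra F G) := Module.finite_of_finite F
  have huv : u * v = 0 := (hu ▸ Ideal.mem_span_singleton_self u : u ∈ ann v)
  have hinv'v_mem : inv' v ∈ ann u := by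
    change inv' v * u = 0
    rw [ha, mul_left_comm, ← inv'_mul, mul_comm v, huv, inv'_eq_domCongr, map_zero, mul_zero]
  have hdvd : v ∣ inv' v := Ideal.mem_span_singleton.mp (hv ▸ hinv'v_mem)
  have hdvd' : inv' v ∣ v := by simpa only [inv'_inv'] using inv'_dvd_inv' hdvd
  obtain ⟨b, hb⟩ := associated_of_dvd_dvd_of_finite hdvd' hdvd
  exact ⟨b, hb.symm.trans (mul_comm _ _)⟩
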